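/- arXiv:1403.1991 — 3 statements merged into one kernel-verified Lean document; each statement's English description precedes it below -/
import Mathlib

section
/- For every δ > 0 there are explicit constants (C = 1 and c = 2δ/(2δ+1)) such that the noisy voter model with noise parameter δ on any finite graph G with n vertices has optimal temporal mixing: for every pair of initial configurations η, ξ ∈ {0,1}^{V(G)} and every t ≥ 0, the total variation distance satisfies ‖P_t(η,·) − P_t(ξ,·)‖ ≤ n·exp(−(2δ/(2δ+1))·t). -/
open Finset

/-- Total variation distance between two (probability) measures on a finite set:
the maximum over all events `A` of `|μ₁(A) - μ₂(A)|`. -/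
noncomputable def tvDist {S : Type*} [Fintype S] (μ ν : S → ℝ) : ℝ :=
  Finset.univ.powerset.sup' (Finset.powerset_nonempty _) fun A =>
    |∑ s ∈ A, μ s - ∑ s ∈ A, ν s|

/-- Flip rate of the noisy voter model with noise `δ` at vertex `x` in configuration `η`. -/
noncomputable def nvRate {V : Type*} [Fintype V] (G : SimpleGraph V) [DecidableRel G.Adj]
    (δ : ℝ) (x : V) (η : V → Bool) : ℝ :=
  (1 / (2 * δ + 1)) *
    ((1 / (G.degree x : ℝ)) * ((Finset.univ.filter fun y => G.Adj x y ∧ η y ≠ η x).card : ℝ) + δ)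

/-- The rate matrix of the noisy voter model: single-spin flips occur at rate `nvRate`,
transitions changing two or more spins have rate `0`, and diagonal entries make rows sum to `0`. -/
noncomputable def nvQ {V : Type*} [Fintype V] [DecidableEq V] (G : SimpleGraph V)
    [DecidableRel G.Adj] (δ : ℝ) : Matrix (V → Bool) (V → Bool) ℝ := fun η η' =>
  if η = η' then -∑ x, nvRate G δ x η
  else if (Finset.univ.filter fun v => η v ≠ η' v).card = 1 then
    ∑ x ∈ Finset.univ.filter (fun v => η v ≠ η' v), nvRate G δ x η
  else 0

/-!
Run two copies of the chain from `η` and `ξ` with shared randomness: at every vertex `z`, at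
rate `δ/(2δ+1)` each, the spin is reset to `false` or to `true`, and for every neighbour `w`, at
rate `1/((2δ+1) d(z))`, the spin of `w` is copied to `z`. Each copy is a noisy voter model, so the
total variation distance is at most the probability that the copies still differ, hence at most
the expected number of disagreeing vertices. A disagreement at `y` is destroyed by either reset
at `y` and is otherwise only moved along edges by copying, so the vector of disagreement
probabilities evolves under a random walk killed at rate `2δ/(2δ+1)`; its total mass is at most
`n e^{-2δt/(2δ+1)}`.

Each of these facts is an intertwining relation `Q₁ C = C Q₂` between generators, which passes
to their exponentials.
-/

open NormedSpace
open scoped Matrix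

namespace Matrix

variable {m n : Type*} [Fintype m] [DecidableEq m] [Fintype n] [DecidableEq n]

section LinftyOp

attribute [local instance] Matrix.linftyOpNormedRing Matrix.linftyOpNormedAlgebra

theorem exp_mul_eq_mul_exp_of_mul_eq {𝕂 : Type*} [RCLike 𝕂] {A : Matrix m m 𝕂}
    {B : Matrix n n 𝕂} {C : Matrix m n 𝕂} (h : A * C = C * B) :
    exp A * C = C * exp B := by
  have hpow (k : ℕ) : A ^ k * C = C * B ^ k := by
    induction k with
    | zero => simp
    | succ k ih => rw [pow_succ, pow_succ, Matrix.mul_assoc, h, ← Matrix.mul_assoc, ih,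
        Matrix.mul_assoc]
  have hA : HasSum (fun k : ℕ => ((k.factorial : 𝕂)⁻¹ • A ^ k) * C) (exp A * C) :=
    (exp_series_hasSum_exp' A).map (addMonoidHomMulRight C)
      (continuous_id.matrix_mul continuous_const)
  have hB : HasSum (fun k : ℕ => C * ((k.factorial : 𝕂)⁻¹ • B ^ k)) (C * exp B) :=
    (exp_series_hasSum_exp' B).map (addMonoidHomMulLeft C)
      (continuous_const.matrix_mul continuous_id)
  simp only [Matrix.smul_mul, Matrix.mul_smul, hpow] at hA hB
  exact hA.unique hB

theorem exp_apply_nonneg_of_nonneg {A : Matrix m m ℝ} (hA : ∀ i j, 0 ≤ A i j) (i j : m) :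
    0 ≤ exp A i j := by
  have hpow (k : ℕ) (i j : m) : 0 ≤ (A ^ k) i j := by
    induction k generalizing i j with
    | zero => by_cases hij : i = j <;> simp [hij]
    | succ k ih =>
      rw [pow_succ, mul_apply]
      exact Finset.sum_nonneg fun l _ => mul_nonneg (ih i l) (hA l j)
  have hsum := Pi.hasSum.mp (Pi.hasSum.mp (exp_series_hasSum_exp' (𝕂 := ℝ) A) i) j
  exact hsum.nonneg fun k => mul_nonneg (by positivity) (hpow k i j)

end LinftyOp

theorem exp_smul_one (a : ℝ) : exp (a • (1 : Matrix m m ℝ)) = Real.exp a • 1 := by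
  simp [smul_one_eq_diagonal, exp_diagonal, Real.exp_eq_exp_ℝ]

theorem exp_apply_nonneg {A : Matrix m m ℝ} (hA : ∀ i j, i ≠ j → 0 ≤ A i j) (i j : m) :
    0 ≤ exp A i j := by
  obtain ⟨c, hc⟩ := Finite.exists_le fun k => -A k k
  have hshift : ∀ i j, 0 ≤ (A + c • 1) i j := by
    intro i j
    by_cases hij : i = j
    · subst hij
      simp only [add_apply, smul_apply, one_apply_eq, smul_eq_mul, mul_one]
      linarith [hc i]
    · simpa [hij] using hA i j hij
  have hsplit : A = (-c) • 1 + (A + c • 1) := by rw [neg_smul]; abel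
  rw [hsplit, exp_add_of_commute _ _ ((Commute.one_left _).smul_left _), exp_smul_one,
    smul_mul, Matrix.one_mul, smul_apply, smul_eq_mul]
  exact mul_nonneg (Real.exp_nonneg _) (exp_apply_nonneg_of_nonneg hshift i j)

theorem sum_exp_apply_of_sum_eq {A : Matrix m m ℝ} {a : ℝ} (hA : ∀ i, ∑ j, A i j = a) (i : m) :
    ∑ j, exp A i j = Real.exp a := by
  let J : Matrix m Unit ℝ := of fun _ _ => 1
  have hJ : A * J = J * (a • (1 : Matrix Unit Unit ℝ)) := by
    ext i u
    simp [J, mul_apply, hA]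
  have := congr_fun (congr_fun (exp_mul_eq_mul_exp_of_mul_eq hJ) i) ()
  simpa [J, mul_apply, exp_smul_one] using this

end Matrix

theorem tvDist_le_of_coupling {S : Type*} [Fintype S] [DecidableEq S] {μ ν : S → ℝ}
    {π : S × S → ℝ} (hπ : ∀ p, 0 ≤ π p) (hμ : ∀ σ, μ σ = ∑ p with p.1 = σ, π p)
    (hν : ∀ σ, ν σ = ∑ p with p.2 = σ, π p) :
    tvDist μ ν ≤ ∑ p with p.1 ≠ p.2, π p := by
  have hmass (e : S × S → S) (m : S → ℝ) (A : Finset S)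
      (hm : ∀ σ, m σ = ∑ p with e p = σ, π p) : ∑ σ ∈ A, m σ = ∑ p, if e p ∈ A then π p else 0 := by
    simp only [hm, Finset.sum_filter]
    rw [Finset.sum_comm]
    exact Finset.sum_congr rfl fun p _ => Finset.sum_ite_eq A (e p) _
  refine Finset.sup'_le _ _ fun A _ => ?_
  rw [hmass Prod.fst μ A hμ, hmass Prod.snd ν A hν, ← Finset.sum_sub_distrib, Finset.sum_filter]
  refine (Finset.abs_sum_le_sum_abs _ _).trans (Finset.sum_le_sum fun p _ => ?_)
  by_cases h : p.1 = p.2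
  · simp [h]
  · by_cases h1 : p.1 ∈ A <;> by_cases h2 : p.2 ∈ A <;>
      simp [h, h1, h2, abs_of_nonneg (hπ p), hπ p]

theorem sum_filter_ne_le_sum_mul_hammingDist {ι β : Type*} [Fintype ι] [DecidableEq ι]
    [Fintype β] [DecidableEq β] {π : (ι → β) × (ι → β) → ℝ} (hπ : ∀ p, 0 ≤ π p) :
    ∑ p with p.1 ≠ p.2, π p ≤ ∑ p, π p * hammingDist p.1 p.2 := by
  rw [Finset.sum_filter]
  refine Finset.sum_le_sum fun p _ => ?_
  split_ifs with h
  · exact le_mul_of_one_le_right (hπ p) (by exact_mod_cast hammingDist_pos.mpr h)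
  · exact mul_nonneg (hπ p) (Nat.cast_nonneg _)

section MapMatrix

variable {S T : Type*} [DecidableEq T]

def mapMatrix (π : S → T) : Matrix S T ℝ := fun σ τ => if π σ = τ then 1 else 0

theorem mul_mapMatrix_apply [Fintype S] {U : Type*} (M : Matrix U S ℝ) (π : S → T) (u : U)
    (τ : T) : (M * mapMatrix π) u τ = ∑ σ with π σ = τ, M u σ := by
  simp [Matrix.mul_apply, mapMatrix, Finset.sum_filter]

theorem mapMatrix_mul_apply [Fintype T] {κ : Type*} (π : S → T) (N : Matrix T κ ℝ) (σ : S)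
    (j : κ) : (mapMatrix π * N) σ j = N (π σ) j := by
  simp [Matrix.mul_apply, mapMatrix]

end MapMatrix

section MoveGenerator

variable {ι S T : Type*} [Fintype ι] [DecidableEq S] [DecidableEq T]

def moveGenerator (r : ι → ℝ) (f : ι → S → S) : Matrix S S ℝ := fun σ σ' =>
  ∑ i, r i * ((if f i σ = σ' then 1 else 0) - if σ = σ' then 1 else 0)

theorem smul_moveGenerator (t : ℝ) (r : ι → ℝ) (f : ι → S → S) :
    t • moveGenerator r f = moveGenerator (t • r) f := by
  ext σ σ'
  simp [moveGenerator, Finset.mul_sum, mul_assoc]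

theorem moveGenerator_apply_self (r : ι → ℝ) (f : ι → S → S) (σ : S) :
    moveGenerator r f σ σ = -∑ i with f i σ ≠ σ, r i := by
  simp only [moveGenerator, Finset.sum_filter, ← Finset.sum_neg_distrib]
  refine Finset.sum_congr rfl fun i _ => ?_
  by_cases h : f i σ = σ <;> simp [h]

theorem moveGenerator_apply_of_ne (r : ι → ℝ) (f : ι → S → S) {σ σ' : S} (h : σ ≠ σ') :
    moveGenerator r f σ σ' = ∑ i with f i σ = σ', r i := by
  simp [moveGenerator, h, Finset.sum_filter]

theorem moveGenerator_apply_nonneg {r : ι → ℝ} (hr : ∀ i, 0 ≤ r i) (f : ι → S → S)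
    {σ σ' : S} (h : σ ≠ σ') : 0 ≤ moveGenerator r f σ σ' := by
  rw [moveGenerator_apply_of_ne r f h]
  exact Finset.sum_nonneg fun i _ => hr i

theorem moveGenerator_mul_apply [Fintype S] {κ : Type*} (r : ι → ℝ) (f : ι → S → S)
    (C : Matrix S κ ℝ) (σ : S) (j : κ) :
    (moveGenerator r f * C) σ j = ∑ i, r i * (C (f i σ) j - C σ j) := by
  simp only [Matrix.mul_apply, moveGenerator, Finset.sum_mul]
  rw [Finset.sum_comm]
  refine Finset.sum_congr rfl fun i _ => ?_
  simp [mul_sub, sub_mul, Finset.sum_sub_distrib]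

theorem moveGenerator_mul_mapMatrix [Fintype S] [Fintype T] (r : ι → ℝ) {f : ι → S → S}
    {g : ι → T → T} {π : S → T} (h : ∀ i σ, π (f i σ) = g i (π σ)) :
    moveGenerator r f * mapMatrix π = mapMatrix π * moveGenerator r g := by
  ext σ τ
  rw [moveGenerator_mul_apply, mapMatrix_mul_apply]
  simp [mapMatrix, moveGenerator, h]

theorem sum_exp_moveGenerator_fiber [Fintype S] [Fintype T] (r : ι → ℝ) {f : ι → S → S}
    {g : ι → T → T} {π : S → T} (h : ∀ i σ, π (f i σ) = g i (π σ)) (σ : S) (τ : T) :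
    ∑ σ' with π σ' = τ, exp (moveGenerator r f) σ σ' =
      exp (moveGenerator r g) (π σ) τ := by
  rw [← mul_mapMatrix_apply, Matrix.exp_mul_eq_mul_exp_of_mul_eq
    (moveGenerator_mul_mapMatrix r h), mapMatrix_mul_apply]

theorem exp_smul_moveGenerator_apply_nonneg [Fintype S] {r : ι → ℝ} (hr : ∀ i, 0 ≤ r i)
    {f : ι → S → S} {t : ℝ} (ht : 0 ≤ t) (σ σ' : S) : 0 ≤ exp (t • moveGenerator r f) σ σ' := by
  rw [smul_moveGenerator]
  exact Matrix.exp_apply_nonneg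
    (fun _ _ h => moveGenerator_apply_nonneg (fun i => mul_nonneg ht (hr i)) f h) σ σ'

def syncCoupling (r : ι → ℝ) (f : ι → S → S) : Matrix (S × S) (S × S) ℝ :=
  moveGenerator r fun i => Prod.map (f i) (f i)

variable [Fintype S]

theorem sum_exp_smul_syncCoupling_fst (t : ℝ) (r : ι → ℝ) (f : ι → S → S) (p : S × S) (σ : S) :
    ∑ q with q.1 = σ, exp (t • syncCoupling r f) p q = exp (t • moveGenerator r f) p.1 σ := by
  rw [syncCoupling, smul_moveGenerator, smul_moveGenerator]
  exact sum_exp_moveGenerator_fiber (π := Prod.fst) (g := f) _ (fun _ _ => rfl) p σ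

theorem sum_exp_smul_syncCoupling_snd (t : ℝ) (r : ι → ℝ) (f : ι → S → S) (p : S × S) (σ : S) :
    ∑ q with q.2 = σ, exp (t • syncCoupling r f) p q = exp (t • moveGenerator r f) p.2 σ := by
  rw [syncCoupling, smul_moveGenerator, smul_moveGenerator]
  exact sum_exp_moveGenerator_fiber (π := Prod.snd) (g := f) _ (fun _ _ => rfl) p σ

end MoveGenerator

section Moves

variable {V : Type*} [DecidableEq V]

def nvMove : V × (Bool ⊕ V) → (V → Bool) → V → Bool
  | (z, .inl b), σ => Function.update σ z b
  | (z, .inr w), σ => Function.update σ z (σ w)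

theorem nvMove_apply_of_ne (i : V × (Bool ⊕ V)) (σ : V → Bool) {y : V} (hy : y ≠ i.1) :
    nvMove i σ y = σ y := by
  obtain ⟨z, b | w⟩ := i <;> exact Function.update_of_ne hy _ _

theorem nvMove_eq_self_iff (i : V × (Bool ⊕ V)) (σ : V → Bool) :
    nvMove i σ = σ ↔ nvMove i σ i.1 = σ i.1 := by
  refine ⟨fun h => by rw [h], fun h => funext fun y => ?_⟩
  by_cases hy : y = i.1
  · rw [hy, h]
  · exact nvMove_apply_of_ne i σ hy

variable [Fintype V]

theorem filter_ne_nvMove_subset (i : V × (Bool ⊕ V)) (σ : V → Bool) :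
    univ.filter (fun v => σ v ≠ nvMove i σ v) ⊆ {i.1} := by
  intro v hv
  rw [Finset.mem_singleton]
  by_contra hvi
  exact (Finset.mem_filter.mp hv).2 (nvMove_apply_of_ne i σ hvi).symm

theorem nvMove_eq_iff_of_filter_ne_eq {σ σ' : V → Bool} {x : V}
    (hx : univ.filter (fun v => σ v ≠ σ' v) = {x}) (i : V × (Bool ⊕ V)) :
    nvMove i σ = σ' ↔ i.1 = x ∧ nvMove i σ x ≠ σ x := by
  have hmem : ∀ y, σ y ≠ σ' y ↔ y = x := fun y => by
    simpa using congrArg (y ∈ ·) hx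
  constructor
  · rintro rfl
    refine ⟨?_, fun h => (hmem x).mpr rfl h.symm⟩
    by_contra hix
    exact (hmem x).mpr rfl (nvMove_apply_of_ne i σ (Ne.symm hix)).symm
  · rintro ⟨rfl, hflip⟩
    funext y
    by_cases hy : y = i.1
    · subst hy
      have hσ' := (hmem i.1).mpr rfl
      revert hflip hσ'
      cases nvMove i σ i.1 <;> cases σ' i.1 <;> cases σ i.1 <;> simp
    · rw [nvMove_apply_of_ne i σ hy]
      exact not_not.mp (mt (hmem y).mp hy)

end Moves

section Rates

variable {V : Type*} [Fintype V] (G : SimpleGraph V) [DecidableRel G.Adj] (δ : ℝ)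

noncomputable def copyRate (z w : V) : ℝ :=
  if G.Adj z w then 1 / (2 * δ + 1) * (1 / (G.degree z : ℝ)) else 0

noncomputable def nvMoveRate : V × (Bool ⊕ V) → ℝ
  | (_, .inl _) => δ / (2 * δ + 1)
  | (z, .inr w) => copyRate G δ z w

variable {G δ}

theorem copyRate_nonneg (hδ : 0 ≤ δ) (z w : V) : 0 ≤ copyRate G δ z w := by
  unfold copyRate
  split_ifs <;> positivity

theorem nvMoveRate_nonneg (hδ : 0 ≤ δ) : ∀ i : V × (Bool ⊕ V), 0 ≤ nvMoveRate G δ i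
  | (_, .inl _) => by simp only [nvMoveRate]; positivity
  | (z, .inr w) => copyRate_nonneg hδ z w

variable [DecidableEq V]

theorem sum_nvMoveRate_flip (x : V) (σ : V → Bool) :
    ∑ m with nvMove (x, m) σ x ≠ σ x, nvMoveRate G δ (x, m) = nvRate G δ x σ := by
  rw [Finset.sum_filter, Fintype.sum_sum_type]
  have hreset : ∑ b : Bool, (if b ≠ σ x then δ / (2 * δ + 1) else 0) = δ / (2 * δ + 1) := by
    cases σ x <;> simp
  have hcopy : ∑ w, (if σ w ≠ σ x then copyRate G δ x w else 0) =
      (#{w | G.Adj x w ∧ σ w ≠ σ x} : ℝ) * (1 / (2 * δ + 1) * (1 / (G.degree x : ℝ))) := by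
    rw [Finset.natCast_card_filter, Finset.sum_mul]
    refine Finset.sum_congr rfl fun w _ => ?_
    by_cases hadj : G.Adj x w <;> simp [copyRate, hadj]
  simp only [nvMove, nvMoveRate, Function.update_self]
  rw [hreset, hcopy, nvRate]
  ring

end Rates

section Generator

variable {V : Type*} [Fintype V] [DecidableEq V] {G : SimpleGraph V} [DecidableRel G.Adj] {δ : ℝ}

theorem nvQ_eq_moveGenerator : nvQ G δ = moveGenerator (nvMoveRate G δ) nvMove := by
  ext σ σ'
  by_cases hσ : σ = σ'
  · subst hσ
    have hflip (x : V) :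
        ∑ m with nvMove (x, m) σ ≠ σ, nvMoveRate G δ (x, m) = nvRate G δ x σ := by
      simp only [ne_eq, nvMove_eq_self_iff]
      exact sum_nvMoveRate_flip x σ
    rw [nvQ, if_pos rfl, moveGenerator_apply_self, Finset.sum_filter, Fintype.sum_prod_type]
    simp only [← Finset.sum_filter, hflip]
  · rw [nvQ, if_neg hσ, moveGenerator_apply_of_ne _ _ hσ]
    split_ifs with h1
    · obtain ⟨x, hx⟩ := Finset.card_eq_one.mp h1
      rw [hx, Finset.sum_singleton, ← sum_nvMoveRate_flip x σ, Finset.sum_filter,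
        Finset.sum_filter, Fintype.sum_prod_type]
      simp [nvMove_eq_iff_of_filter_ne_eq hx, ite_and]
    · symm
      refine Finset.sum_eq_zero fun i hi => absurd ?_ h1
      obtain rfl := (Finset.mem_filter.mp hi).2
      refine le_antisymm ((Finset.card_le_card (filter_ne_nvMove_subset i σ)).trans
        (Finset.card_singleton _).le) (Finset.card_pos.mpr ?_)
      obtain ⟨y, hy⟩ := Function.ne_iff.mp hσ
      exact ⟨y, Finset.mem_filter.mpr ⟨Finset.mem_univ y, hy⟩⟩

end Generator

section Disagreement

variable {ι β : Type*} [Fintype ι] [DecidableEq β]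

def disagreement : Matrix ((ι → β) × (ι → β)) ι ℝ := fun p y => if p.1 y ≠ p.2 y then 1 else 0

theorem hammingDist_eq_sum_disagreement (σ τ : ι → β) :
    (hammingDist σ τ : ℝ) = ∑ y, disagreement (σ, τ) y :=
  Finset.natCast_card_filter _ _

end Disagreement

section Discrepancy

variable {V : Type*} [Fintype V] [DecidableEq V] (G : SimpleGraph V) [DecidableRel G.Adj] (δ : ℝ)

noncomputable def discrepancyGenerator : Matrix V V ℝ :=
  Matrix.of (copyRate G δ) -
    Matrix.diagonal fun y => ∑ w, copyRate G δ y w + 2 * δ / (2 * δ + 1)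

variable {G δ}

theorem sum_discrepancyGenerator_apply (y : V) :
    ∑ w, discrepancyGenerator G δ y w = -(2 * δ / (2 * δ + 1)) := by
  simp [discrepancyGenerator, Matrix.diagonal_apply, Finset.sum_sub_distrib]

theorem discrepancyGenerator_apply_nonneg (hδ : 0 ≤ δ) {y w : V} (h : y ≠ w) :
    0 ≤ discrepancyGenerator G δ y w := by
  simpa [discrepancyGenerator, h] using copyRate_nonneg hδ y w

theorem sum_mul_discrepancyGenerator_apply (v : V → ℝ) (y : V) :
    ∑ w, v w * discrepancyGenerator G δ y w =
      ∑ w, copyRate G δ y w * (v w - v y) - 2 * δ / (2 * δ + 1) * v y := by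
  simp only [discrepancyGenerator, Matrix.sub_apply, Matrix.of_apply, Matrix.diagonal_apply,
    mul_sub, Finset.sum_sub_distrib, mul_ite, mul_zero, Finset.sum_ite_eq, Finset.mem_univ,
    if_true, ← Finset.sum_mul]
  simp only [mul_comm (v _)]
  ring

theorem syncCoupling_mul_disagreement :
    syncCoupling (nvMoveRate G δ) nvMove * disagreement (ι := V) (β := Bool) =
      disagreement (ι := V) (β := Bool) * (discrepancyGenerator G δ)ᵀ := by
  ext p y
  rw [syncCoupling, moveGenerator_mul_apply, Fintype.sum_prod_type, Finset.sum_eq_single y]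
  · have hreset (b : Bool) :
        disagreement (Prod.map (nvMove (y, .inl b)) (nvMove (y, .inl b)) p) y = 0 := by
      simp [disagreement, nvMove]
    have hcopy (w : V) :
        disagreement (Prod.map (nvMove (y, .inr w)) (nvMove (y, .inr w)) p) y =
          disagreement p w := by
      simp [disagreement, nvMove]
    rw [Matrix.mul_apply]
    simp only [Matrix.transpose_apply, sum_mul_discrepancyGenerator_apply, Fintype.sum_sum_type,
      hreset, hcopy, nvMoveRate, Fintype.sum_bool]
    ring
  · intro z _ hzy
    refine Finset.sum_eq_zero fun m _ => ?_
    simp [disagreement, nvMove_apply_of_ne (z, m) _ (Ne.symm hzy)]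
  · simp

theorem sum_exp_smul_syncCoupling_mul_hammingDist_le (hδ : 0 ≤ δ) {t : ℝ} (ht : 0 ≤ t)
    (p : (V → Bool) × (V → Bool)) :
    ∑ q, exp (t • syncCoupling (nvMoveRate G δ) nvMove) p q * hammingDist q.1 q.2 ≤
      Fintype.card V * Real.exp (-(2 * δ / (2 * δ + 1)) * t) := by
  set K := exp (t • syncCoupling (nvMoveRate G δ) nvMove)
  set B := exp (t • discrepancyGenerator G δ)
  have hB : ∀ y w, 0 ≤ B y w := Matrix.exp_apply_nonneg fun y w h =>
    mul_nonneg ht (discrepancyGenerator_apply_nonneg hδ h)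
  have hrow : ∀ y, ∑ w, B y w = Real.exp (-(2 * δ / (2 * δ + 1)) * t) :=
    Matrix.sum_exp_apply_of_sum_eq fun y => by
      simp only [Matrix.smul_apply, smul_eq_mul, ← Finset.mul_sum, sum_discrepancyGenerator_apply]
      ring
  have hKB : K * disagreement (ι := V) (β := Bool) = disagreement (ι := V) (β := Bool) * Bᵀ := by
    rw [← Matrix.exp_transpose]
    refine Matrix.exp_mul_eq_mul_exp_of_mul_eq ?_
    rw [Matrix.smul_mul, syncCoupling_mul_disagreement, Matrix.transpose_smul, Matrix.mul_smul]
  calc ∑ q, K p q * hammingDist q.1 q.2 = ∑ y, (K * disagreement (ι := V) (β := Bool)) p y := by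
        simp only [hammingDist_eq_sum_disagreement, Matrix.mul_apply, Finset.mul_sum]
        exact Finset.sum_comm
    _ = ∑ y, ∑ w, disagreement p w * B y w := by
        rw [hKB]
        simp only [Matrix.mul_apply, Matrix.transpose_apply]
    _ ≤ ∑ y, ∑ w, B y w := by
        gcongr with y _ w _
        exact mul_le_of_le_one_left (hB y w) (by unfold disagreement; split_ifs <;> norm_num)
    _ = _ := by simp [hrow]

end Discrepancy

theorem noisy_voter_optimal_temporal_mixing_general
    {V : Type*} [Fintype V] [DecidableEq V] (δ : ℝ) (hδ : 0 < δ)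
    (G : SimpleGraph V) [DecidableRel G.Adj]
    (η ξ : V → Bool) (t : ℝ) (ht : 0 ≤ t) :
    tvDist (fun σ => NormedSpace.exp (t • nvQ G δ) η σ)
        (fun σ => NormedSpace.exp (t • nvQ G δ) ξ σ) ≤
      (Fintype.card V : ℝ) * Real.exp (-(2 * δ / (2 * δ + 1)) * t) := by
  set K := exp (t • syncCoupling (nvMoveRate G δ) nvMove)
  have hK : ∀ q, 0 ≤ K (η, ξ) q :=
    exp_smul_moveGenerator_apply_nonneg (nvMoveRate_nonneg hδ.le) ht _
  rw [nvQ_eq_moveGenerator]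
  calc _ ≤ ∑ q with q.1 ≠ q.2, K (η, ξ) q :=
        tvDist_le_of_coupling hK (fun σ => (sum_exp_smul_syncCoupling_fst _ _ _ _ σ).symm)
          (fun σ => (sum_exp_smul_syncCoupling_snd _ _ _ _ σ).symm)
    _ ≤ ∑ q, K (η, ξ) q * hammingDist q.1 q.2 := sum_filter_ne_le_sum_mul_hammingDist hK
    _ ≤ _ := sum_exp_smul_syncCoupling_mul_hammingDist_le hδ.le ht _

/-- Optimal temporal mixing for the noisy voter model, with explicit constants `C = 1` and
`c = 2δ/(2δ+1)`: on any finite graph with `n` vertices, for any two initial configurations,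
`‖P_t(η,·) − P_t(ξ,·)‖ ≤ n·exp(−(2δ/(2δ+1))·t)`. -/
theorem noisy_voter_optimal_temporal_mixing
    {V : Type*} [Fintype V] [DecidableEq V] (δ : ℝ) (hδ : 0 < δ)
    (G : SimpleGraph V) [DecidableRel G.Adj] (hdeg : ∀ v, 1 ≤ G.degree v)
    (η ξ : V → Bool) (t : ℝ) (ht : 0 ≤ t) :
    tvDist (fun σ => NormedSpace.exp (t • nvQ G δ) η σ)
        (fun σ => NormedSpace.exp (t • nvQ G δ) ξ σ) ≤
      (Fintype.card V : ℝ) * Real.exp (-(2 * δ / (2 * δ + 1)) * t) :=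
  noisy_voter_optimal_temporal_mixing_general δ hδ G η ξ t ht
end

section
/- Dini derivative of a pointwise maximum: let f_1, …, f_n : ℝ → ℝ be finitely many functions, each differentiable at a point t, let M(s) := max_{1 ≤ k ≤ n} f_k(s), and let a ∈ ℝ. If f_k'(t) ≤ a for every index k with f_k(t) = M(t), then the upper right Dini derivative of M at t satisfies D⁺M(t) := limsup_{h → 0⁺} (M(t+h) − M(t))/h ≤ a. -/
/-- Dini derivative of a pointwise maximum of finitely many functions: if each `f k` is
differentiable at `t` and `f k' (t) ≤ a` for every index `k` attaining the maximum
`M(t) = max_k f k (t)`, then the upper right Dini derivative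
`D⁺M(t) = limsup_{h → 0⁺} (M(t+h) − M(t))/h` satisfies `D⁺M(t) ≤ a`. -/
theorem dini_deriv_max_le
    {ι : Type*} [Fintype ι] [Nonempty ι] (f : ι → ℝ → ℝ) (t a : ℝ)
    (hdiff : ∀ k, DifferentiableAt ℝ (f k) t)
    (hmax : ∀ k, f k t = (⨆ j, f j t) → deriv (f k) t ≤ a) :
    Filter.limsup (fun h : ℝ => ((⨆ j, f j (t + h)) - ⨆ j, f j t) / h)
      (nhdsWithin 0 (Set.Ioi 0)) ≤ a := by
  set L := nhdsWithin (0:ℝ) (Set.Ioi 0) with hL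
  have hmap : Filter.Tendsto (fun h : ℝ => t + h) L (nhdsWithin t {t}ᶜ) := by
    apply tendsto_nhdsWithin_of_tendsto_nhds_of_eventually_within
    · have : Filter.Tendsto (fun h : ℝ => t + h) (nhds 0) (nhds (t + 0)) :=
        (continuous_const.add continuous_id).tendsto 0
      simpa using this.mono_left nhdsWithin_le_nhds
    · filter_upwards [self_mem_nhdsWithin] with h (hh : 0 < h)
      simp only [Set.mem_compl_iff, Set.mem_singleton_iff]
      intro hc
      nlinarith [hc]
  have hslope : ∀ k, Filter.Tendsto (fun h : ℝ => (f k (t + h) - f k t) / h) L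
      (nhds (deriv (f k) t)) := by
    intro k
    have hd := (hdiff k).hasDerivAt
    rw [hasDerivAt_iff_tendsto_slope] at hd
    have := hd.comp hmap
    convert this using 2 with h
    simp only [Function.comp, slope_def_field]
    rw [add_sub_cancel_left]
  have hbdd : ∀ s : ℝ, BddAbove (Set.range fun j => f j s) := fun s =>
    (Set.finite_range _).bddAbove
  obtain ⟨k0, hk0⟩ := exists_eq_ciSup_of_finite (f := fun j => f j t)
  -- cobounded below
  have hcob : Filter.IsCoboundedUnder (· ≤ ·)
      L (fun h : ℝ => ((⨆ j, f j (t + h)) - ⨆ j, f j t) / h) := by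
    apply Filter.isCoboundedUnder_le_of_eventually_le L (x := deriv (f k0) t - 1)
    have h1 : ∀ᶠ h in L, deriv (f k0) t - 1 ≤ (f k0 (t + h) - f k0 t) / h :=
      (hslope k0).eventually (eventually_ge_nhds (by linarith))
    filter_upwards [h1, self_mem_nhdsWithin] with h hh (hpos : 0 < h)
    refine hh.trans ?_
    rw [hk0]
    apply div_le_div_of_nonneg_right ?_ hpos.le
    gcongr
    exact le_ciSup (hbdd (t + h)) k0
  refine le_of_forall_pos_le_add fun ε hε => ?_
  apply Filter.limsup_le_of_le hcob
  have hev : ∀ k, ∀ᶠ h in L, f k (t + h) ≤ (⨆ j, f j t) + h * (a + ε) := by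
    intro k
    by_cases hk : f k t = ⨆ j, f j t
    · have hda : deriv (f k) t ≤ a := hmax k hk
      have := (hslope k).eventually (eventually_le_nhds (show deriv (f k) t < a + ε by linarith))
      filter_upwards [this, self_mem_nhdsWithin] with h hh (hpos : 0 < h)
      rw [div_le_iff₀ hpos] at hh
      rw [← hk]
      linarith [hh]
    · have hlt : f k t < ⨆ j, f j t :=
        lt_of_le_of_ne (le_ciSup (hbdd t) k) hk
      have h1 : Filter.Tendsto (fun h : ℝ => f k (t + h)) L (nhds (f k t)) := by
        have hc : ContinuousAt (f k) t := (hdiff k).continuousAt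
        have : Filter.Tendsto (fun h : ℝ => t + h) L (nhds t) := by
          have : Filter.Tendsto (fun h : ℝ => t + h) (nhds 0) (nhds (t + 0)) :=
            (continuous_const.add continuous_id).tendsto 0
          simpa using this.mono_left nhdsWithin_le_nhds
        exact hc.tendsto.comp this
      have h2 : Filter.Tendsto (fun h : ℝ => (⨆ j, f j t) + h * (a + ε)) L
          (nhds ((⨆ j, f j t) + 0 * (a + ε))) := by
        apply Filter.Tendsto.const_add
        apply Filter.Tendsto.mul_const
        exact Filter.tendsto_id.mono_left nhdsWithin_le_nhds
      have := h1.eventually_lt h2 (by simpa using hlt)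
      filter_upwards [this] with h hh using hh.le
  have hall : ∀ᶠ h in L, ∀ k, f k (t + h) ≤ (⨆ j, f j t) + h * (a + ε) :=
    Filter.eventually_all.2 hev
  filter_upwards [hall, self_mem_nhdsWithin] with h hh (hpos : 0 < h)
  rw [div_le_iff₀ hpos]
  have : (⨆ j, f j (t + h)) ≤ (⨆ j, f j t) + h * (a + ε) := ciSup_le hh
  linarith [this]
end

section
/- On the cycle ℤ/nℤ (n ≥ 3), the noisy voter model with parameter δ > 0 is reversible with respect to the Ising Gibbs measure at inverse temperature β = (1/4)·log(1 + 1/δ): the probability measure μ on {0,1}^{ℤ/nℤ} defined by μ(η) = Z⁻¹·exp(β·Σ_{i ∈ ℤ/nℤ} σ_η(i)·σ_η(i+1)), where σ_η(i) = 2η(i) − 1 and Z is the normalizing constant, satisfies the detailed balance condition μ(η)·Q(η, η^x) = μ(η^x)·Q(η^x, η) for every configuration η and every site x. -/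
/-!
Flipping the spin at `x` when `k ∈ {0, 1, 2}` of its two neighbours disagree with it lowers the
energy `∑ σᵢ σᵢ₊₁` by `4 (1 - k)`, while the flip rate out of `η` is proportional to `k/2 + δ`
and the rate back is proportional to `(2 - k)/2 + δ`. As `e^{4β} = 1 + 1/δ = (1 + δ)/δ`, the
Gibbs factor `e^{4β(1 - k)}` equals the ratio of these two rates for each of the three values
of `k`.
-/

open Finset

/-- The cycle graph on `ℤ/nℤ`: `i ~ j` iff `j = i ± 1 (mod n)` and `i ≠ j`. -/
def cycleGraph (n : ℕ) : SimpleGraph (ZMod n) where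
  Adj i j := i ≠ j ∧ (j = i + 1 ∨ i = j + 1)
  symm := ⟨by rintro i j ⟨h1, h2⟩; exact ⟨h1.symm, h2.symm⟩⟩
  loopless := ⟨by rintro i ⟨h, _⟩; exact h rfl⟩

instance (n : ℕ) : DecidableRel (cycleGraph n).Adj := fun i j =>
  inferInstanceAs (Decidable (i ≠ j ∧ (j = i + 1 ∨ i = j + 1)))

/-- The `±1`-spin associated to a `{0,1}`-configuration: `σ_η(i) = 2η(i) − 1`. -/
def spin {n : ℕ} (η : ZMod n → Bool) (i : ZMod n) : ℝ :=
  2 * (if η i = true then 1 else 0) - 1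

/-- The Ising Gibbs measure at inverse temperature `β` on the cycle `ℤ/nℤ`:
`μ(η) = Z⁻¹·exp(β·Σ_i σ_η(i)·σ_η(i+1))`. -/
noncomputable def isingGibbs (n : ℕ) [NeZero n] (β : ℝ) (η : ZMod n → Bool) : ℝ :=
  Real.exp (β * ∑ i : ZMod n, spin η i * spin η (i + 1)) /
    ∑ η' : ZMod n → Bool, Real.exp (β * ∑ i : ZMod n, spin η' i * spin η' (i + 1))

theorem update_not_update_not {V : Type*} [DecidableEq V] (η : V → Bool) (x : V) :
    Function.update (Function.update η x (!η x)) x (!(Function.update η x (!η x)) x) = η := by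
  simp

section NoisyVoter

variable {V : Type*} [Fintype V] [DecidableEq V] (G : SimpleGraph V) [DecidableRel G.Adj]

theorem nvQ_update_not (δ : ℝ) (η : V → Bool) (x : V) :
    nvQ G δ η (Function.update η x (!η x)) = nvRate G δ x η := by
  have hdiff : (univ.filter fun v => η v ≠ Function.update η x (!η x) v) = {x} := by
    ext v
    by_cases hv : v = x
    · subst hv; simp
    · simp [hv]
  have hne : η ≠ Function.update η x (!η x) := fun h => by
    simpa using congrFun h x
  simp [nvQ, hne, hdiff]

theorem nvQ_update_not_symm (δ : ℝ) (η : V → Bool) (x : V) :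
    nvQ G δ (Function.update η x (!η x)) η = nvRate G δ x (Function.update η x (!η x)) := by
  simpa only [update_not_update_not] using nvQ_update_not G δ (Function.update η x (!η x)) x

theorem card_disagree_update_not_add (η : V → Bool) (x : V) :
    #{y | G.Adj x y ∧ Function.update η x (!η x) y ≠ Function.update η x (!η x) x} +
      #{y | G.Adj x y ∧ η y ≠ η x} = G.degree x := by
  have hflip : (univ.filter fun y =>
      G.Adj x y ∧ Function.update η x (!η x) y ≠ Function.update η x (!η x) x) =
      (G.neighborFinset x).filter fun y => η y = η x := by
    ext y
    by_cases hy : y = x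
    · subst hy; simp
    · simp [hy, Bool.eq_not]
  have hsame : (univ.filter fun y => G.Adj x y ∧ η y ≠ η x) =
      (G.neighborFinset x).filter fun y => ¬η y = η x := by
    ext y; simp
  rw [hflip, hsame, card_filter_add_card_filter_not, SimpleGraph.card_neighborFinset_eq_degree]

end NoisyVoter

section Cycle

variable {n : ℕ}

theorem cycleGraph_neighborFinset [NeZero n] (h : (1 : ZMod n) ≠ 0) (x : ZMod n) :
    (cycleGraph n).neighborFinset x = {x + 1, x - 1} := by
  ext y
  rw [SimpleGraph.mem_neighborFinset]
  simp only [cycleGraph, mem_insert, mem_singleton]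
  constructor
  · rintro ⟨-, rfl | rfl⟩
    · exact Or.inl rfl
    · exact Or.inr (by ring)
  · rintro (rfl | rfl)
    · exact ⟨fun e => h (by linear_combination e.symm), Or.inl rfl⟩
    · exact ⟨fun e => h (by linear_combination -e.symm), Or.inr (by ring)⟩

theorem two_ne_zero_of_three_le (hn : 3 ≤ n) : (2 : ZMod n) ≠ 0 := by
  intro h
  have h2 : ((2 : ℕ) : ZMod n) = 0 := by exact_mod_cast h
  rw [ZMod.natCast_eq_zero_iff] at h2
  have := Nat.le_of_dvd two_pos h2
  omega

theorem cycleGraph_degree [NeZero n] (hn : 3 ≤ n) (x : ZMod n) : (cycleGraph n).degree x = 2 := by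
  have : Fact (1 < n) := ⟨by omega⟩
  have hpm : x + 1 ≠ x - 1 := fun e => two_ne_zero_of_three_le hn (by linear_combination e)
  rw [← SimpleGraph.card_neighborFinset_eq_degree, cycleGraph_neighborFinset one_ne_zero,
    card_pair hpm]

def isingEnergy [NeZero n] (η : ZMod n → Bool) : ℝ := ∑ i : ZMod n, spin η i * spin η (i + 1)

theorem spin_update_not_self (η : ZMod n → Bool) (x : ZMod n) :
    spin (Function.update η x (!η x)) x = -spin η x := by
  cases h : η x <;> norm_num [spin, h]

theorem spin_update_of_ne (η : ZMod n → Bool) {x i : ZMod n} (b : Bool) (hi : i ≠ x) :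
    spin (Function.update η x b) i = spin η i := by
  simp [spin, hi]

theorem spin_mul_spin (η : ZMod n → Bool) (i j : ZMod n) :
    spin η i * spin η j = if η j = η i then 1 else -1 := by
  cases hi : η i <;> cases hj : η j <;> norm_num [spin, hi, hj]

theorem isingEnergy_sub_update_not [NeZero n] (h : (1 : ZMod n) ≠ 0) (η : ZMod n → Bool)
    (x : ZMod n) :
    isingEnergy η - isingEnergy (Function.update η x (!η x)) =
      2 * spin η x * (spin η (x - 1) + spin η (x + 1)) := by
  have hprev : x - 1 ≠ x := fun e => h (by linear_combination -e)
  have hnext : x + 1 ≠ x := fun e => h (by linear_combination e)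
  rw [isingEnergy, isingEnergy, ← sum_sub_distrib,
    ← sum_subset (subset_univ {x - 1, x}), sum_pair hprev, sub_add_cancel,
    spin_update_not_self, spin_update_of_ne _ _ hprev, spin_update_of_ne _ _ hnext]
  · ring
  · intro i _ hi
    simp only [mem_insert, mem_singleton, not_or] at hi
    have hi' : i + 1 ≠ x := fun e => hi.1 (by linear_combination e)
    rw [spin_update_of_ne _ _ hi.2, spin_update_of_ne _ _ hi', sub_self]

theorem spin_mul_add_spin [NeZero n] (hn : 3 ≤ n) (η : ZMod n → Bool) (x : ZMod n) :
    spin η x * (spin η (x - 1) + spin η (x + 1)) =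
      2 - 2 * (#{y | (cycleGraph n).Adj x y ∧ η y ≠ η x} : ℝ) := by
  have : Fact (1 < n) := ⟨by omega⟩
  have hpm : x + 1 ≠ x - 1 := fun e => two_ne_zero_of_three_le hn (by linear_combination e)
  have hfilter : (univ.filter fun y => (cycleGraph n).Adj x y ∧ η y ≠ η x) =
      ({x + 1, x - 1} : Finset (ZMod n)).filter fun y => η y ≠ η x := by
    ext y
    simp [← cycleGraph_neighborFinset one_ne_zero x]
  rw [hfilter, card_filter, sum_pair hpm, mul_add, spin_mul_spin, spin_mul_spin]
  by_cases hprev : η (x - 1) = η x <;> by_cases hnext : η (x + 1) = η x <;> norm_num [hprev, hnext]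

end Cycle

theorem exp_log_one_add_inv_mul_balance {δ : ℝ} (hδ : 0 < δ) {k : ℕ} (hk : k ≤ 2) :
    Real.exp (Real.log (1 + 1 / δ) * (1 - k)) * (k + 2 * δ) = 2 - k + 2 * δ := by
  have hpos : 0 < 1 + 1 / δ := by positivity
  interval_cases k
  · simp only [Nat.cast_zero, sub_zero, mul_one, Real.exp_log hpos]
    field_simp
    ring
  · norm_num
  · rw [show Real.log (1 + 1 / δ) * (1 - ((2 : ℕ) : ℝ)) = -Real.log (1 + 1 / δ) by push_cast; ring,
      Real.exp_neg, Real.exp_log hpos]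
    field_simp
    ring

theorem exp_isingEnergy_mul_nvRate_update_not {n : ℕ} [NeZero n] (hn : 3 ≤ n) {δ : ℝ}
    (hδ : 0 < δ) (η : ZMod n → Bool) (x : ZMod n) :
    Real.exp (1 / 4 * Real.log (1 + 1 / δ) * isingEnergy η) * nvRate (cycleGraph n) δ x η =
      Real.exp (1 / 4 * Real.log (1 + 1 / δ) * isingEnergy (Function.update η x (!η x))) *
        nvRate (cycleGraph n) δ x (Function.update η x (!η x)) := by
  have : Fact (1 < n) := ⟨by omega⟩
  set η' := Function.update η x (!η x)
  set k := #{y | (cycleGraph n).Adj x y ∧ η y ≠ η x}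
  have hcard : #{y | (cycleGraph n).Adj x y ∧ η' y ≠ η' x} + k = 2 := by
    rw [← cycleGraph_degree hn x]
    exact card_disagree_update_not_add _ η x
  have hk : k ≤ 2 := by omega
  have hk' : #{y | (cycleGraph n).Adj x y ∧ η' y ≠ η' x} = 2 - k := by omega
  have hE : isingEnergy η = isingEnergy η' + 4 * (1 - k) := by
    have := isingEnergy_sub_update_not one_ne_zero η x
    rw [mul_assoc, spin_mul_add_spin hn] at this
    linear_combination this
  rw [nvRate, nvRate, cycleGraph_degree hn, hk', Nat.cast_sub hk, hE, mul_add, Real.exp_add,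
    show 1 / 4 * Real.log (1 + 1 / δ) * (4 * (1 - k)) = Real.log (1 + 1 / δ) * (1 - k) by ring]
  linear_combination Real.exp (1 / 4 * Real.log (1 + 1 / δ) * isingEnergy η') / (2 * δ + 1) / 2 *
    exp_log_one_add_inv_mul_balance hδ hk

/-- On the cycle `ℤ/nℤ` (`n ≥ 3`), the noisy voter model with parameter `δ > 0` is reversible
with respect to the Ising Gibbs measure at inverse temperature `β = (1/4)·log(1 + 1/δ)`:
detailed balance `μ(η)·Q(η,η^x) = μ(η^x)·Q(η^x,η)` holds at every configuration `η` and
every site `x`. -/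
theorem noisy_voter_cycle_reversible_ising
    (n : ℕ) [NeZero n] (hn : 3 ≤ n) (δ : ℝ) (hδ : 0 < δ)
    (η : ZMod n → Bool) (x : ZMod n) :
    isingGibbs n ((1 / 4) * Real.log (1 + 1 / δ)) η *
        nvQ (cycleGraph n) δ η (Function.update η x (!η x)) =
      isingGibbs n ((1 / 4) * Real.log (1 + 1 / δ)) (Function.update η x (!η x)) *
        nvQ (cycleGraph n) δ (Function.update η x (!η x)) η := by
  rw [nvQ_update_not, nvQ_update_not_symm, isingGibbs, isingGibbs, ← isingEnergy, ← isingEnergy,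
    div_mul_eq_mul_div (Real.exp _), div_mul_eq_mul_div (Real.exp _),
    exp_isingEnergy_mul_nvRate_update_not hn hδ]
end
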